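/- arXiv:2104.02354 — 3 statements merged into one kernel-verified Lean document; each statement's English description precedes it below -/
import Mathlib

section
/- The adjoints of the pseudo-fermionic Pauli operators also satisfy the Pauli relations: let a, b be 2×2 complex matrices with a·b + b·a = 1 and a² = b² = 0, set μ₁ = b + a, μ₂ = i·(b − a), μ₃ = a·b − b·a, and let ρⱼ = μⱼᴴ be the conjugate transpose of μⱼ (j = 1, 2, 3). Then ρ₁² = ρ₂² = ρ₃² = 1, ρ₁·ρ₂ = i·ρ₃, ρ₂·ρ₃ = i·ρ₁, and ρ₃·ρ₁ = i·ρ₂. -/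
open Matrix

/-!
Conjugate transposition turns a pseudo-fermionic pair `(a, b)` into the pseudo-fermionic pair
`(bᴴ, aᴴ)`, and the adjoints `ρⱼ = μⱼᴴ` are exactly the operators `μⱼ` built from that new pair.
So it suffices that the `μⱼ` of any pseudo-fermionic pair satisfy the Pauli relations, which is
a computation in the ring using only `a² = b² = 0`, `ab + ba = 1` and their consequences
`aba = a`, `bab = b`.
-/

/-- Unlike for fermions, `b` need not be the adjoint of `a`. -/
structure IsPseudoFermionPair {R : Type*} [Ring R] (a b : R) : Prop where
  anticomm : a * b + b * a = 1
  sq_left : a ^ 2 = 0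
  sq_right : b ^ 2 = 0

namespace IsPseudoFermionPair

section Ring

variable {R : Type*} [Ring R] {a b : R}

theorem symm (h : IsPseudoFermionPair a b) : IsPseudoFermionPair b a :=
  ⟨by rw [add_comm, h.anticomm], h.sq_right, h.sq_left⟩

theorem star [StarRing R] (h : IsPseudoFermionPair a b) :
    IsPseudoFermionPair (star a) (star b) where
  anticomm := by rw [← star_mul, ← star_mul, ← star_add, add_comm, h.anticomm, star_one]
  sq_left := by rw [← star_pow, h.sq_left, star_zero]
  sq_right := by rw [← star_pow, h.sq_right, star_zero]

theorem mul_self_left (h : IsPseudoFermionPair a b) : a * a = 0 := by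
  rw [← sq, h.sq_left]

theorem mul_self_right (h : IsPseudoFermionPair a b) : b * b = 0 :=
  h.symm.mul_self_left

theorem mul_mul_left (h : IsPseudoFermionPair a b) : a * b * a = a := by
  calc a * b * a = (a * b + b * a) * a - b * (a * a) := by noncomm_ring
    _ = a := by rw [h.anticomm, h.mul_self_left]; simp

theorem mul_mul_right (h : IsPseudoFermionPair a b) : b * a * b = b :=
  h.symm.mul_mul_left

theorem add_sq (h : IsPseudoFermionPair a b) : (b + a) ^ 2 = 1 := by
  calc (b + a) ^ 2 = (a * b + b * a) + a * a + b * b := by noncomm_ring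
    _ = 1 := by rw [h.anticomm, h.mul_self_left, h.mul_self_right]; simp

theorem sub_sq (h : IsPseudoFermionPair a b) : (b - a) ^ 2 = -1 := by
  calc (b - a) ^ 2 = -(a * b + b * a) + a * a + b * b := by noncomm_ring
    _ = -1 := by rw [h.anticomm, h.mul_self_left, h.mul_self_right]; simp

theorem commutator_sq (h : IsPseudoFermionPair a b) : (a * b - b * a) ^ 2 = 1 := by
  calc (a * b - b * a) ^ 2
        = (a * b * a) * b + (b * a * b) * a - a * (b * b) * a - b * (a * a) * b := by
          noncomm_ring
    _ = 1 := by
      rw [h.mul_mul_left, h.mul_mul_right, h.mul_self_left, h.mul_self_right]; simp [h.anticomm]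

theorem commutator_mul_add (h : IsPseudoFermionPair a b) :
    (a * b - b * a) * (b + a) = a - b := by
  calc (a * b - b * a) * (b + a) = a * (b * b) + a * b * a - b * a * b - b * (a * a) := by
        noncomm_ring
    _ = a - b := by rw [h.mul_mul_left, h.mul_mul_right, h.mul_self_left, h.mul_self_right]; simp

theorem sub_mul_commutator (h : IsPseudoFermionPair a b) :
    (b - a) * (a * b - b * a) = b + a := by
  calc (b - a) * (a * b - b * a) = b * a * b - (b * b) * a - (a * a) * b + a * b * a := by
        noncomm_ring
    _ = b + a := by rw [h.mul_mul_left, h.mul_mul_right, h.mul_self_left, h.mul_self_right]; simp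

theorem add_mul_sub (h : IsPseudoFermionPair a b) :
    (b + a) * (b - a) = a * b - b * a := by
  calc (b + a) * (b - a) = b * b - a * a + (a * b - b * a) := by noncomm_ring
    _ = a * b - b * a := by rw [h.mul_self_left, h.mul_self_right]; simp

end Ring

section Algebra

variable {R : Type*} [Ring R] [Algebra ℂ R] {a b : R}

/-- The Pauli relations for `μ₁ = b + a`, `μ₂ = i (b - a)`, `μ₃ = a b - b a`. -/
theorem pauli_relations (h : IsPseudoFermionPair a b) :
    (b + a) ^ 2 = 1 ∧
    (Complex.I • (b - a)) ^ 2 = 1 ∧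
    (a * b - b * a) ^ 2 = 1 ∧
    (b + a) * (Complex.I • (b - a)) = Complex.I • (a * b - b * a) ∧
    (Complex.I • (b - a)) * (a * b - b * a) = Complex.I • (b + a) ∧
    (a * b - b * a) * (b + a) = Complex.I • (Complex.I • (b - a)) := by
  refine ⟨h.add_sq, ?_, h.commutator_sq, ?_, ?_, ?_⟩
  · rw [smul_pow, h.sub_sq, Complex.I_sq, neg_one_smul, neg_neg]
  · rw [mul_smul_comm, h.add_mul_sub]
  · rw [smul_mul_assoc, h.sub_mul_commutator]
  · rw [smul_smul, Complex.I_mul_I, neg_one_smul, neg_sub, h.commutator_mul_add]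

end Algebra

end IsPseudoFermionPair

/-- the conjugate transposes of the pseudo-fermionic Pauli operators also
satisfy the Pauli relations. -/
theorem pseudo_fermions_adjoint_pauli_relations
    (a b : Matrix (Fin 2) (Fin 2) ℂ)
    (hab : a * b + b * a = 1) (ha : a ^ 2 = 0) (hb : b ^ 2 = 0) :
    ((b + a)ᴴ) ^ 2 = 1 ∧
    ((Complex.I • (b - a))ᴴ) ^ 2 = 1 ∧
    ((a * b - b * a)ᴴ) ^ 2 = 1 ∧
    (b + a)ᴴ * (Complex.I • (b - a))ᴴ = Complex.I • (a * b - b * a)ᴴ ∧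
    (Complex.I • (b - a))ᴴ * (a * b - b * a)ᴴ = Complex.I • (b + a)ᴴ ∧
    (a * b - b * a)ᴴ * (b + a)ᴴ = Complex.I • (Complex.I • (b - a))ᴴ := by
  have h : IsPseudoFermionPair bᴴ aᴴ := (IsPseudoFermionPair.mk hab ha hb).star.symm
  have hρ₁ : (b + a)ᴴ = aᴴ + bᴴ := by rw [conjTranspose_add, add_comm]
  have hρ₂ : (Complex.I • (b - a))ᴴ = Complex.I • (aᴴ - bᴴ) := by
    rw [conjTranspose_smul, conjTranspose_sub, Complex.star_def, Complex.conj_I, neg_smul,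
      ← smul_neg, neg_sub]
  have hρ₃ : (a * b - b * a)ᴴ = bᴴ * aᴴ - aᴴ * bᴴ := by
    rw [conjTranspose_sub, conjTranspose_mul, conjTranspose_mul]
  rw [hρ₁, hρ₂, hρ₃]
  exact h.pauli_relations
end

section
/- The two-level-atom model is pseudo-fermionic: let δ ∈ ℝ and ω ∈ ℂ with ω ≠ 0 and |ω| > |δ|, set Ω = √(|ω|² − δ²) and e = ω/|ω| (so that ω = |ω| e with |e| = 1), and define the 2×2 complex matrices a = (1/(2Ω)) · [[−|ω|, −ē(Ω + iδ)], [e(Ω − iδ), |ω|]] and b = (1/(2Ω)) · [[−|ω|, ē(Ω − iδ)], [−e(Ω + iδ), |ω|]], where ē is the complex conjugate of e. Then a·b + b·a = 1 and a² = b² = 0. -/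
/-!
A traceless 2×2 matrix squares to `-det • 1` (Cayley–Hamilton). Up to the scalar `1/(2Ω)`,
`a` and `b` are traceless with determinant `|e|²(Ω² + δ²) - |ω|² = 0`, so `a² = b² = 0`, and then
`ab + ba = (a + b)²`. The sum `a + b` is again traceless, of determinant `-4(|ω|² - δ²) = -4Ω²`,
which the scalar `1/(2Ω)` normalises to `(a + b)² = 1`.
-/

open Matrix Complex ComplexConjugate

theorem Matrix.traceless_fin_two_sq {R : Type*} [CommRing R] (r x y : R) :
    !![-r, x; y, r] ^ 2 = (r ^ 2 + x * y) • (1 : Matrix (Fin 2) (Fin 2) R) := by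
  ext i j
  fin_cases i <;> fin_cases j <;> simp [sq] <;> ring

theorem mul_add_mul_eq_add_sq_of_sq_eq_zero {R : Type*} [Ring R] {a b : R} (ha : a ^ 2 = 0)
    (hb : b ^ 2 = 0) : a * b + b * a = (a + b) ^ 2 := by
  rw [sq, add_mul, mul_add, mul_add, ← sq, ← sq, ha, hb]
  abel

theorem Complex.conj_mul_self_div_norm {z : ℂ} (hz : z ≠ 0) :
    conj (z / ‖z‖) * (z / ‖z‖) = 1 := by
  have : (‖z‖ : ℂ) ≠ 0 := by exact_mod_cast norm_ne_zero_iff.2 hz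
  rw [map_div₀, conj_ofReal, div_mul_div_comm, conj_mul', ← sq, div_self (pow_ne_zero 2 this)]

theorem two_level_atom_pseudo_fermionic_general (δ : ℝ) (ω : ℂ)
    (hδω : |δ| < ‖ω‖) :
    let Ω : ℝ := Real.sqrt (‖ω‖ ^ 2 - δ ^ 2)
    let e : ℂ := ω / (‖ω‖ : ℂ)
    let a : Matrix (Fin 2) (Fin 2) ℂ :=
      (1 / (2 * (Ω : ℂ))) •
        !![-(‖ω‖ : ℂ), -(starRingEnd ℂ e) * ((Ω : ℂ) + Complex.I * (δ : ℂ));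
           e * ((Ω : ℂ) - Complex.I * (δ : ℂ)), (‖ω‖ : ℂ)]
    let b : Matrix (Fin 2) (Fin 2) ℂ :=
      (1 / (2 * (Ω : ℂ))) •
        !![-(‖ω‖ : ℂ), (starRingEnd ℂ e) * ((Ω : ℂ) - Complex.I * (δ : ℂ));
           -(e * ((Ω : ℂ) + Complex.I * (δ : ℂ))), (‖ω‖ : ℂ)]
    a * b + b * a = 1 ∧ a ^ 2 = 0 ∧ b ^ 2 = 0 := by
  intro Ω e a b
  have hdisc : 0 < ‖ω‖ ^ 2 - δ ^ 2 := by nlinarith [abs_nonneg δ, sq_abs δ]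
  have hΩ : (Ω : ℂ) ≠ 0 := by exact_mod_cast (Real.sqrt_pos.2 hdisc).ne'
  have hΩsq : (Ω : ℂ) ^ 2 = ‖ω‖ ^ 2 - δ ^ 2 := by exact_mod_cast Real.sq_sqrt hdisc.le
  have he : conj e * e = 1 :=
    conj_mul_self_div_norm (norm_pos_iff.1 ((abs_nonneg δ).trans_lt hδω))
  have ha : a ^ 2 = 0 := by
    have hdet : (‖ω‖ : ℂ) ^ 2 + -conj e * (Ω + I * δ) * (e * (Ω - I * δ)) = 0 := by
      linear_combination (I ^ 2 * δ ^ 2 - Ω ^ 2 : ℂ) * he - hΩsq + (δ : ℂ) ^ 2 * I_sq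
    rw [smul_pow, traceless_fin_two_sq, hdet, zero_smul, smul_zero]
  have hb : b ^ 2 = 0 := by
    have hdet : (‖ω‖ : ℂ) ^ 2 + conj e * (Ω - I * δ) * -(e * (Ω + I * δ)) = 0 := by
      linear_combination (I ^ 2 * δ ^ 2 - Ω ^ 2 : ℂ) * he - hΩsq + (δ : ℂ) ^ 2 * I_sq
    rw [smul_pow, traceless_fin_two_sq, hdet, zero_smul, smul_zero]
  have hsum : a + b = (1 / (2 * (Ω : ℂ))) •
      !![-(2 * ‖ω‖ : ℂ), -(2 * I * δ * conj e); -(2 * I * δ * e), 2 * ‖ω‖] := by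
    rw [← smul_add]
    congr 1
    ext i j
    fin_cases i <;> fin_cases j <;> simp <;> ring
  have hdet_sum : (2 * (‖ω‖ : ℂ)) ^ 2 + -(2 * I * δ * conj e) * -(2 * I * δ * e) = (2 * Ω) ^ 2 := by
    linear_combination (4 * I ^ 2 * δ ^ 2 : ℂ) * he - 4 * hΩsq + 4 * (δ : ℂ) ^ 2 * I_sq
  refine ⟨?_, ha, hb⟩
  rw [mul_add_mul_eq_add_sq_of_sq_eq_zero ha hb, hsum, smul_pow, traceless_fin_two_sq, smul_smul,
    hdet_sum, ← mul_pow, one_div_mul_cancel (mul_ne_zero two_ne_zero hΩ), one_pow, one_smul]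

/-- the two-level-atom model is pseudo-fermionic: the matrices `a` and `b`
built from the parameters `δ`, `ω` satisfy `a·b + b·a = 1` and `a² = b² = 0`. -/
theorem two_level_atom_pseudo_fermionic (δ : ℝ) (ω : ℂ) (hω : ω ≠ 0)
    (hδω : |δ| < ‖ω‖) :
    let Ω : ℝ := Real.sqrt (‖ω‖ ^ 2 - δ ^ 2)
    let e : ℂ := ω / (‖ω‖ : ℂ)
    let a : Matrix (Fin 2) (Fin 2) ℂ :=
      (1 / (2 * (Ω : ℂ))) •
        !![-(‖ω‖ : ℂ), -(starRingEnd ℂ e) * ((Ω : ℂ) + Complex.I * (δ : ℂ));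
           e * ((Ω : ℂ) - Complex.I * (δ : ℂ)), (‖ω‖ : ℂ)]
    let b : Matrix (Fin 2) (Fin 2) ℂ :=
      (1 / (2 * (Ω : ℂ))) •
        !![-(‖ω‖ : ℂ), (starRingEnd ℂ e) * ((Ω : ℂ) - Complex.I * (δ : ℂ));
           -(e * ((Ω : ℂ) + Complex.I * (δ : ℂ))), (‖ω‖ : ℂ)]
    a * b + b * a = 1 ∧ a ^ 2 = 0 ∧ b ^ 2 = 0 :=
  two_level_atom_pseudo_fermionic_general δ ω hδω
end

section
/- The effective hamiltonian of the two-level atom is expressed through pseudo-fermions: let δ ∈ ℝ and ω ∈ ℂ with ω ≠ 0 and |ω| > |δ|, set Ω = √(|ω|² − δ²), e = ω/|ω|, and define a = (1/(2Ω)) · [[−|ω|, −ē(Ω + iδ)], [e(Ω − iδ), |ω|]], b = (1/(2Ω)) · [[−|ω|, ē(Ω − iδ)], [−e(Ω + iδ), |ω|]], and H_eff = (1/2) · [[−iδ, ω̄], [ω, iδ]], where ω̄, ē denote complex conjugates. Then H_eff = Ω·(b·a) − (Ω/2)·1 and H_eff = −(Ω/2)·(a·b − b·a). -/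
/-!
Put `r = |ω|`, `c = iδ` and `e' = ē`; then only `e e' = 1` and `Ω² = r² + c²` matter, and the
computation works over any field of characteristic `≠ 2`. One finds
`b a = (2Ω)⁻¹ • !![Ω - c, e' r; e r, Ω + c]`, which is the first identity, and the pseudo-fermionic
anticommutation relation `a b + b a = 1`, so that `a b - b a = 1 - 2 b a` turns the first identity
into the second.
-/

open Matrix Complex

namespace TwoLevelAtom

variable {K : Type*} [Field K]

def pseudoFermionA (r Ω c e e' : K) : Matrix (Fin 2) (Fin 2) K :=
  (1 / (2 * Ω)) • !![-r, -e' * (Ω + c); e * (Ω - c), r]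

def pseudoFermionB (r Ω c e e' : K) : Matrix (Fin 2) (Fin 2) K :=
  (1 / (2 * Ω)) • !![-r, e' * (Ω - c); -(e * (Ω + c)), r]

def effectiveHamiltonian (r c e e' : K) : Matrix (Fin 2) (Fin 2) K :=
  (1 / 2 : K) • !![-c, e' * r; e * r, c]

variable [NeZero (2 : K)] {r Ω c e e' : K}

theorem pseudoFermionA_mul_pseudoFermionB_add (hΩ : Ω ≠ 0) (he : e * e' = 1)
    (hΩsq : Ω ^ 2 = r ^ 2 + c ^ 2) :
    pseudoFermionA r Ω c e e' * pseudoFermionB r Ω c e e' +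
      pseudoFermionB r Ω c e e' * pseudoFermionA r Ω c e e' = 1 := by
  ext i j
  fin_cases i <;> fin_cases j <;>
    simp only [pseudoFermionA, pseudoFermionB, Matrix.add_apply, Matrix.smul_mul, Matrix.mul_smul,
      Matrix.smul_apply, mul_fin_two, one_fin_two, of_apply, cons_val', cons_val_zero, cons_val_one,
      cons_val_fin_one, smul_eq_mul, Fin.zero_eta, Fin.mk_one, Fin.isValue] <;>
    field_simp
  · linear_combination 2 * (Ω ^ 2 + c ^ 2) * he - 2 * hΩsq
  · ring
  · ring
  · linear_combination 2 * (Ω ^ 2 + c ^ 2) * he - 2 * hΩsq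

theorem effectiveHamiltonian_eq (hΩ : Ω ≠ 0) (he : e * e' = 1)
    (hΩsq : Ω ^ 2 = r ^ 2 + c ^ 2) :
    effectiveHamiltonian r c e e' =
      Ω • (pseudoFermionB r Ω c e e' * pseudoFermionA r Ω c e e') - (Ω / 2) • 1 := by
  ext i j
  fin_cases i <;> fin_cases j <;>
    simp only [effectiveHamiltonian, pseudoFermionA, pseudoFermionB, Matrix.sub_apply, Matrix.smul_mul,
      Matrix.mul_smul, Matrix.smul_apply, mul_fin_two, one_fin_two, of_apply, cons_val', cons_val_zero,
      cons_val_one, cons_val_fin_one, smul_eq_mul, Fin.zero_eta, Fin.mk_one, Fin.isValue] <;>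
    field_simp
  · linear_combination -(Ω - c) ^ 2 * he + hΩsq
  · ring
  · ring
  · linear_combination -(Ω + c) ^ 2 * he + hΩsq

theorem effectiveHamiltonian_eq_commutator (hΩ : Ω ≠ 0) (he : e * e' = 1)
    (hΩsq : Ω ^ 2 = r ^ 2 + c ^ 2) :
    effectiveHamiltonian r c e e' =
      -(Ω / 2) • (pseudoFermionA r Ω c e e' * pseudoFermionB r Ω c e e' -
        pseudoFermionB r Ω c e e' * pseudoFermionA r Ω c e e') := by
  rw [effectiveHamiltonian_eq hΩ he hΩsq,
    eq_sub_of_add_eq (pseudoFermionA_mul_pseudoFermionB_add hΩ he hΩsq)]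
  linear_combination (norm := module)
    (add_halves Ω).symm • (pseudoFermionB r Ω c e e' * pseudoFermionA r Ω c e e')

end TwoLevelAtom

open TwoLevelAtom

theorem two_level_atom_hamiltonian_general (δ : ℝ) (ω : ℂ)
    (hδω : |δ| < ‖ω‖) :
    let Ω : ℝ := Real.sqrt (‖ω‖ ^ 2 - δ ^ 2)
    let e : ℂ := ω / (‖ω‖ : ℂ)
    let a : Matrix (Fin 2) (Fin 2) ℂ :=
      (1 / (2 * (Ω : ℂ))) •
        !![-(‖ω‖ : ℂ), -(starRingEnd ℂ e) * ((Ω : ℂ) + Complex.I * (δ : ℂ));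
           e * ((Ω : ℂ) - Complex.I * (δ : ℂ)), (‖ω‖ : ℂ)]
    let b : Matrix (Fin 2) (Fin 2) ℂ :=
      (1 / (2 * (Ω : ℂ))) •
        !![-(‖ω‖ : ℂ), (starRingEnd ℂ e) * ((Ω : ℂ) - Complex.I * (δ : ℂ));
           -(e * ((Ω : ℂ) + Complex.I * (δ : ℂ))), (‖ω‖ : ℂ)]
    let Heff : Matrix (Fin 2) (Fin 2) ℂ :=
      (1 / 2 : ℂ) • !![-Complex.I * (δ : ℂ), starRingEnd ℂ ω; ω, Complex.I * (δ : ℂ)]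
    Heff = (Ω : ℂ) • (b * a) - ((Ω : ℂ) / 2) • (1 : Matrix (Fin 2) (Fin 2) ℂ) ∧
    Heff = -(((Ω : ℂ) / 2)) • (a * b - b * a) := by
  intro Ω e a b Heff
  have hr : 0 < ‖ω‖ := (abs_nonneg δ).trans_lt hδω
  have hsq : 0 < ‖ω‖ ^ 2 - δ ^ 2 := sub_pos.mpr (sq_lt_sq.mpr (by rwa [abs_norm]))
  have hΩ : (Ω : ℂ) ≠ 0 := ofReal_ne_zero.mpr (Real.sqrt_pos.mpr hsq).ne'
  have hΩsq : (Ω : ℂ) ^ 2 = (‖ω‖ : ℂ) ^ 2 + (I * δ) ^ 2 := by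
    have h : ((Ω ^ 2 : ℝ) : ℂ) = ((‖ω‖ ^ 2 - δ ^ 2 : ℝ) : ℂ) := by rw [Real.sq_sqrt hsq.le]
    push_cast at h
    linear_combination h - (δ : ℂ) ^ 2 * I_sq
  have he : e * starRingEnd ℂ e = 1 := by
    rw [mul_conj', norm_div, Complex.norm_of_nonneg (norm_nonneg ω), div_self hr.ne', ofReal_one,
      one_pow]
  have hHeff : Heff = effectiveHamiltonian (‖ω‖ : ℂ) (I * δ) e (starRingEnd ℂ e) := by
    have hω : e * ‖ω‖ = ω := div_mul_cancel₀ ω (ofReal_ne_zero.mpr hr.ne')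
    have hω' : starRingEnd ℂ e * ‖ω‖ = starRingEnd ℂ ω := by
      simpa only [map_mul, conj_ofReal] using congrArg (starRingEnd ℂ) hω
    simp only [Heff, effectiveHamiltonian, neg_mul, hω, hω']
  rw [hHeff]
  exact ⟨effectiveHamiltonian_eq hΩ he hΩsq, effectiveHamiltonian_eq_commutator hΩ he hΩsq⟩

/-- the effective hamiltonian of the two-level atom is expressed through
pseudo-fermions: `H_eff = Ω(ba − ½·1) = −(Ω/2)·μ₃`. -/
theorem two_level_atom_hamiltonian (δ : ℝ) (ω : ℂ) (hω : ω ≠ 0)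
    (hδω : |δ| < ‖ω‖) :
    let Ω : ℝ := Real.sqrt (‖ω‖ ^ 2 - δ ^ 2)
    let e : ℂ := ω / (‖ω‖ : ℂ)
    let a : Matrix (Fin 2) (Fin 2) ℂ :=
      (1 / (2 * (Ω : ℂ))) •
        !![-(‖ω‖ : ℂ), -(starRingEnd ℂ e) * ((Ω : ℂ) + Complex.I * (δ : ℂ));
           e * ((Ω : ℂ) - Complex.I * (δ : ℂ)), (‖ω‖ : ℂ)]
    let b : Matrix (Fin 2) (Fin 2) ℂ :=
      (1 / (2 * (Ω : ℂ))) •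
        !![-(‖ω‖ : ℂ), (starRingEnd ℂ e) * ((Ω : ℂ) - Complex.I * (δ : ℂ));
           -(e * ((Ω : ℂ) + Complex.I * (δ : ℂ))), (‖ω‖ : ℂ)]
    let Heff : Matrix (Fin 2) (Fin 2) ℂ :=
      (1 / 2 : ℂ) • !![-Complex.I * (δ : ℂ), starRingEnd ℂ ω; ω, Complex.I * (δ : ℂ)]
    Heff = (Ω : ℂ) • (b * a) - ((Ω : ℂ) / 2) • (1 : Matrix (Fin 2) (Fin 2) ℂ) ∧
    Heff = -(((Ω : ℂ) / 2)) • (a * b - b * a) :=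
  two_level_atom_hamiltonian_general δ ω hδω
end
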